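/- Let k be a positive integer and let 𝕋 be the infinite k-star with origin 0. Define π(u,v) := dist(x,x') − y − y' for u = (x,y), v = (x',y') ∈ 𝕋 × ℝ. Then for all u, v, u', v' ∈ 𝔾: (1) π(u,v) ∈ ℤ; (2) π((u+u')/2, (v+v')/2) ∈ (1/2)ℤ and π(u,v) + π(u',v') ≥ 2·π((u+u')/2, (v+v')/2), where (u+u')/2 denotes the componentwise midpoint in 𝕋 × ℝ. -/

import Mathlib

open Finset

/-- Representatives of points of the infinite `k`-star: a nonnegative radius and a
branch index. -/
abbrev StarRep (k : ℕ) : Type := {r : ℝ // 0 ≤ r} × Fin k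

/-- Two representatives are identified iff they are equal or both have radius `0`. -/
def starRel (k : ℕ) (p q : StarRep k) : Prop := p = q ∨ (p.1.1 = 0 ∧ q.1.1 = 0)

/-- The setoid identifying all points of radius `0` (the origin). -/
def starSetoid (k : ℕ) : Setoid (StarRep k) where
  r := starRel k
  iseqv := by
    constructor
    · intro p; left; rfl
    · rintro p q (rfl | ⟨h1, h2⟩)
      · left; rfl
      · right; exact ⟨h2, h1⟩
    · rintro p q r (rfl | ⟨h1, h2⟩) (rfl | ⟨h3, h4⟩)
      · left; rfl
      · right; exact ⟨h3, h4⟩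
      · right; exact ⟨h1, h2⟩
      · right; exact ⟨h1, h4⟩

/-- The infinite `k`-star `𝕋`: `k` half-lines glued at a common origin. -/
def TStar (k : ℕ) : Type := Quotient (starSetoid k)

/-- Distance on representatives. -/
noncomputable def starDistFun (k : ℕ) (p q : StarRep k) : ℝ :=
  if p.2 = q.2 then |p.1.1 - q.1.1| else p.1.1 + q.1.1

theorem starDistFun_zero_right (k : ℕ) (p q : StarRep k) (h : q.1.1 = 0) :
    starDistFun k p q = p.1.1 := by
  unfold starDistFun; rw [h]
  split <;> simp [abs_of_nonneg p.1.2]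

theorem starDistFun_zero_left (k : ℕ) (p q : StarRep k) (h : p.1.1 = 0) :
    starDistFun k p q = q.1.1 := by
  unfold starDistFun; rw [h]
  split <;> simp [abs_of_nonneg q.1.2, abs_sub_comm]

/-- The metric `dist` of the infinite `k`-star. -/
noncomputable def starDist (k : ℕ) : TStar k → TStar k → ℝ :=
  Quotient.lift₂ (starDistFun k) (by
    rintro p q p' q' (rfl | ⟨h1, h2⟩) (rfl | ⟨h3, h4⟩)
    · rfl
    · rw [starDistFun_zero_right k p q h3, starDistFun_zero_right k p q' h4]
    · rw [starDistFun_zero_left k p q h1, starDistFun_zero_left k p' q h2]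
    · rw [starDistFun_zero_right k p q h3, starDistFun_zero_right k p' q' h4, h1, h2])

/-- The distance from the origin (the radius). -/
noncomputable def starRad (k : ℕ) : TStar k → ℝ :=
  Quotient.lift (fun p : StarRep k => p.1.1) (by
    rintro p q (rfl | ⟨h1, h2⟩) <;> simp_all)

/-- The point at distance `r ≥ 0` on the `s`-th branch. -/
def starPt (k : ℕ) (r : ℝ) (hr : 0 ≤ r) (s : Fin k) : TStar k :=
  Quotient.mk (starSetoid k) (⟨r, hr⟩, s)

/-- A real is an integer. -/
def IsIntegralReal (r : ℝ) : Prop := ∃ z : ℤ, r = (z : ℝ)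

/-- A real lies in `ℤ + 1/2`. -/
def IsHalfIntegralOdd (r : ℝ) : Prop := ∃ z : ℤ, r = (z : ℝ) + 1 / 2

/-- The grid `𝔾 ⊆ 𝕋 × ℝ`: both coordinates integral, or both proper half-integral. -/
def StarGrid (k : ℕ) : Set (TStar k × ℝ) :=
  {p | (IsIntegralReal (starRad k p.1) ∧ IsIntegralReal p.2) ∨
    (IsHalfIntegralOdd (starRad k p.1) ∧ IsHalfIntegralOdd p.2)}

/-- Midpoint on representatives: on a common branch the usual midpoint; on different
branches, the point halfway along the geodesic through the origin. -/
noncomputable def midRep (k : ℕ) (p q : StarRep k) : StarRep k :=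
  if p.2 = q.2 then (⟨(p.1.1 + q.1.1) / 2, div_nonneg (add_nonneg p.1.2 q.1.2) (by norm_num)⟩, p.2)
  else if h : q.1.1 ≤ p.1.1 then
    (⟨(p.1.1 - q.1.1) / 2, div_nonneg (sub_nonneg.2 h) (by norm_num)⟩, p.2)
  else (⟨(q.1.1 - p.1.1) / 2, div_nonneg (sub_nonneg.2 (le_of_not_ge h)) (by norm_num)⟩, q.2)

theorem midRep_zero_right (k : ℕ) (p q : StarRep k) (h : q.1.1 = 0) :
    midRep k p q = (⟨p.1.1 / 2, div_nonneg p.1.2 (by norm_num)⟩, p.2) := by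
  unfold midRep
  split_ifs with h1 h2
  · simp only [Prod.mk.injEq]
    exact ⟨Subtype.ext (show (p.1.1 + q.1.1) / 2 = p.1.1 / 2 by rw [h]; ring), trivial⟩
  · simp only [Prod.mk.injEq]
    exact ⟨Subtype.ext (show (p.1.1 - q.1.1) / 2 = p.1.1 / 2 by rw [h]; ring), trivial⟩
  · exact absurd (show q.1.1 ≤ p.1.1 by rw [h]; exact p.1.2) h2

theorem midRep_zero_left (k : ℕ) (p q : StarRep k) (h : p.1.1 = 0) :
    starRel k (midRep k p q)
      (⟨q.1.1 / 2, div_nonneg q.1.2 (by norm_num)⟩, q.2) := by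
  unfold midRep
  split_ifs with h1 h2
  · left
    simp only [Prod.mk.injEq]
    exact ⟨Subtype.ext (show (p.1.1 + q.1.1) / 2 = q.1.1 / 2 by rw [h]; ring), h1⟩
  · right
    have hq : q.1.1 = 0 := le_antisymm (by rw [h] at h2; exact h2) q.1.2
    constructor
    · show (p.1.1 - q.1.1) / 2 = 0
      rw [h, hq]; ring
    · show q.1.1 / 2 = 0
      rw [hq]; ring
  · left
    simp only [Prod.mk.injEq]
    exact ⟨Subtype.ext (show (q.1.1 - p.1.1) / 2 = q.1.1 / 2 by rw [h]; ring), trivial⟩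

/-- The midpoint operation on `𝕋`. -/
noncomputable def starMid (k : ℕ) : TStar k → TStar k → TStar k :=
  Quotient.map₂ (midRep k) (by
    rintro p p' (rfl | ⟨hp, hp'⟩) q q' (rfl | ⟨hq, hq'⟩)
    · exact (starSetoid k).refl _
    · rw [midRep_zero_right k p q hq, midRep_zero_right k p q' hq']
      try exact (starSetoid k).refl _
    · exact (starSetoid k).trans (midRep_zero_left k p q hp)
        ((starSetoid k).symm (midRep_zero_left k p' q hp'))
    · rw [midRep_zero_right k p q hq, midRep_zero_right k p' q' hq']
      right
      constructor
      · show p.1.1 / 2 = 0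
        rw [hp]; ring
      · show p'.1.1 / 2 = 0
        rw [hp']; ring)

/-- The componentwise midpoint on `𝕋 × ℝ`. -/
noncomputable def gridMid (k : ℕ) (u v : TStar k × ℝ) : TStar k × ℝ :=
  (starMid k u.1 v.1, (u.2 + v.2) / 2)

/-- `π((x,y),(x',y')) := dist(x,x') − y − y'`. -/
noncomputable def piFun (k : ℕ) (u v : TStar k × ℝ) : ℝ :=
  starDist k u.1 v.1 - u.2 - v.2


/-! On the union of two branches the star is a line, so a distance is a signed sum `±r ± r'`
of radii and twice the radius of a midpoint is one as well. For a grid point `(x, y)` both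
`r(x) - y` and `-r(x) - y` are integers, which gives the (half-)integrality of `π`.

Convexity is Busemann's inequality for the geodesic space `𝕋`: the midpoint map is
`1/2`-Lipschitz in each argument (a case check on branches), so by the triangle inequality through
`(z + x')/2` we get `2 d((x + x')/2, (z + z')/2) ≤ d(x, z) + d(x', z')`; the `y`-terms of `π` are
affine and cancel. -/

section Star

variable {k : ℕ}

theorem starDistFun_triangle (p q r : StarRep k) :
    starDistFun k p r ≤ starDistFun k p q + starDistFun k q r := by
  have := p.1.2; have := q.1.2; have := r.1.2
  unfold starDistFun
  grind

theorem two_mul_starDistFun_midRep_midRep_left_le (a b c : StarRep k) :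
    2 * starDistFun k (midRep k a b) (midRep k a c) ≤ starDistFun k b c := by
  have := a.1.2; have := b.1.2; have := c.1.2
  unfold starDistFun midRep
  grind

theorem two_mul_starDistFun_midRep_midRep_right_le (a b c : StarRep k) :
    2 * starDistFun k (midRep k b a) (midRep k c a) ≤ starDistFun k b c := by
  have := a.1.2; have := b.1.2; have := c.1.2
  unfold starDistFun midRep
  grind

theorem two_mul_starDistFun_midRep_le (p p' q q' : StarRep k) :
    2 * starDistFun k (midRep k p p') (midRep k q q') ≤
      starDistFun k p q + starDistFun k p' q' :=
  calc 2 * starDistFun k (midRep k p p') (midRep k q q')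
      ≤ 2 * starDistFun k (midRep k p p') (midRep k q p') +
          2 * starDistFun k (midRep k q p') (midRep k q q') := by
        linarith [starDistFun_triangle (midRep k p p') (midRep k q p') (midRep k q q')]
    _ ≤ starDistFun k p q + starDistFun k p' q' :=
        add_le_add (two_mul_starDistFun_midRep_midRep_right_le p' p q)
          (two_mul_starDistFun_midRep_midRep_left_le q p' q')

theorem two_mul_starDist_starMid_le (x x' z z' : TStar k) :
    2 * starDist k (starMid k x x') (starMid k z z') ≤ starDist k x z + starDist k x' z' :=
  Quotient.inductionOn₂ x x' fun _ _ => Quotient.inductionOn₂ z z' fun _ _ =>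
    two_mul_starDistFun_midRep_le _ _ _ _

theorem exists_units_starDistFun_eq (p q : StarRep k) :
    ∃ ε₁ ε₂ : ℤˣ, starDistFun k p q = (ε₁ : ℤ) * p.1.1 + (ε₂ : ℤ) * q.1.1 := by
  unfold starDistFun
  split_ifs
  · rcases le_total p.1.1 q.1.1 with h | h
    · exact ⟨-1, 1, by push_cast; rw [abs_of_nonpos (sub_nonpos.2 h)]; ring⟩
    · exact ⟨1, -1, by push_cast; rw [abs_of_nonneg (sub_nonneg.2 h)]; ring⟩
  · exact ⟨1, 1, by push_cast; ring⟩

theorem exists_units_two_mul_midRep_eq (p q : StarRep k) :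
    ∃ ε₁ ε₂ : ℤˣ, 2 * (midRep k p q).1.1 = (ε₁ : ℤ) * p.1.1 + (ε₂ : ℤ) * q.1.1 := by
  unfold midRep
  split_ifs
  · exact ⟨1, 1, by push_cast; ring⟩
  · exact ⟨1, -1, by push_cast; ring⟩
  · exact ⟨-1, 1, by push_cast; ring⟩

theorem exists_units_starDist_eq (x z : TStar k) :
    ∃ ε₁ ε₂ : ℤˣ, starDist k x z = (ε₁ : ℤ) * starRad k x + (ε₂ : ℤ) * starRad k z :=
  Quotient.inductionOn₂ x z exists_units_starDistFun_eq

theorem exists_units_two_mul_starRad_starMid_eq (x z : TStar k) :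
    ∃ ε₁ ε₂ : ℤˣ,
      2 * starRad k (starMid k x z) = (ε₁ : ℤ) * starRad k x + (ε₂ : ℤ) * starRad k z :=
  Quotient.inductionOn₂ x z exists_units_two_mul_midRep_eq

end Star

section Grid

variable {k : ℕ} {u v u' v' : TStar k × ℝ}

theorem exists_int_unit_mul_starRad_sub (hu : u ∈ StarGrid k) (σ : ℤˣ) :
    ∃ a : ℤ, (σ : ℤ) * starRad k u.1 - u.2 = a := by
  rcases hu with ⟨⟨m, hm⟩, n, hn⟩ | ⟨⟨m, hm⟩, n, hn⟩ <;>
    rcases Int.units_eq_one_or σ with rfl | rfl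
  · exact ⟨m - n, by push_cast; rw [hm, hn]; ring⟩
  · exact ⟨-m - n, by push_cast; rw [hm, hn]; ring⟩
  · exact ⟨m - n, by push_cast; rw [hm, hn]; ring⟩
  · exact ⟨-m - n - 1, by push_cast; rw [hm, hn]; ring⟩

theorem exists_int_piFun_eq (hu : u ∈ StarGrid k) (hv : v ∈ StarGrid k) :
    ∃ z : ℤ, piFun k u v = z := by
  obtain ⟨ε₁, ε₂, hd⟩ := exists_units_starDist_eq u.1 v.1
  obtain ⟨a, ha⟩ := exists_int_unit_mul_starRad_sub hu ε₁
  obtain ⟨b, hb⟩ := exists_int_unit_mul_starRad_sub hv ε₂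
  exact ⟨a + b, by rw [piFun]; push_cast; linear_combination hd + ha + hb⟩

theorem exists_int_piFun_gridMid_eq (hu : u ∈ StarGrid k) (hv : v ∈ StarGrid k)
    (hu' : u' ∈ StarGrid k) (hv' : v' ∈ StarGrid k) :
    ∃ z : ℤ, piFun k (gridMid k u u') (gridMid k v v') = z / 2 := by
  obtain ⟨δ₁, δ₂, hd⟩ := exists_units_starDist_eq (starMid k u.1 u'.1) (starMid k v.1 v'.1)
  obtain ⟨α₁, α₂, hmu⟩ := exists_units_two_mul_starRad_starMid_eq u.1 u'.1
  obtain ⟨β₁, β₂, hmv⟩ := exists_units_two_mul_starRad_starMid_eq v.1 v'.1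
  obtain ⟨a₁, ha₁⟩ := exists_int_unit_mul_starRad_sub hu (δ₁ * α₁)
  obtain ⟨a₂, ha₂⟩ := exists_int_unit_mul_starRad_sub hu' (δ₁ * α₂)
  obtain ⟨a₃, ha₃⟩ := exists_int_unit_mul_starRad_sub hv (δ₂ * β₁)
  obtain ⟨a₄, ha₄⟩ := exists_int_unit_mul_starRad_sub hv' (δ₂ * β₂)
  refine ⟨a₁ + a₂ + a₃ + a₄, ?_⟩
  push_cast [piFun, gridMid] at ha₁ ha₂ ha₃ ha₄ ⊢
  linear_combination hd + (δ₁ : ℤ) * hmu / 2 + (δ₂ : ℤ) * hmv / 2 +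
    (ha₁ + ha₂ + ha₃ + ha₄) / 2

end Grid

theorem two_mul_piFun_gridMid_le {k : ℕ} (u v u' v' : TStar k × ℝ) :
    2 * piFun k (gridMid k u u') (gridMid k v v') ≤ piFun k u v + piFun k u' v' := by
  have := two_mul_starDist_starMid_le u.1 u'.1 v.1 v'.1
  simp only [piFun, gridMid]
  linarith

theorem piFun_integral_and_midpoint_convex_general
    (k : ℕ) (u v u' v' : TStar k × ℝ)
    (hu : u ∈ StarGrid k) (hv : v ∈ StarGrid k)
    (hu' : u' ∈ StarGrid k) (hv' : v' ∈ StarGrid k) :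
    (∃ z : ℤ, piFun k u v = (z : ℝ)) ∧
    (∃ z : ℤ, piFun k (gridMid k u u') (gridMid k v v') = (z : ℝ) / 2) ∧
    2 * piFun k (gridMid k u u') (gridMid k v v') ≤ piFun k u v + piFun k u' v' :=
  ⟨exists_int_piFun_eq hu hv, exists_int_piFun_gridMid_eq hu hv hu' hv',
    two_mul_piFun_gridMid_le u v u' v'⟩

/-- **Integrality and midpoint convexity of `π` on `𝔾`** (Hirai–Mizutani):
for points of the grid `𝔾`, (1) `π(u,v) ∈ ℤ`; (2) `π` at midpoints is half-integral
and satisfies `π(u,v) + π(u',v') ≥ 2·π((u+u')/2, (v+v')/2)`. -/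
theorem piFun_integral_and_midpoint_convex
    (k : ℕ) (hk : 1 ≤ k) (u v u' v' : TStar k × ℝ)
    (hu : u ∈ StarGrid k) (hv : v ∈ StarGrid k)
    (hu' : u' ∈ StarGrid k) (hv' : v' ∈ StarGrid k) :
    (∃ z : ℤ, piFun k u v = (z : ℝ)) ∧
    (∃ z : ℤ, piFun k (gridMid k u u') (gridMid k v v') = (z : ℝ) / 2) ∧
    2 * piFun k (gridMid k u u') (gridMid k v v') ≤ piFun k u v + piFun k u' v' :=
  piFun_integral_and_midpoint_convex_general k u v u' v' hu hv hu' hv'
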